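/- For every b ≥ 2 and every n ≥ 0, A_b(b·n) = (2b−1)·A_b(n). -/

import Mathlib

/-- Number of distinct words in `L_b` (no leading zero, or empty) occurring as
scattered subwords (subsequences) of `u`. -/
def lbCount (u : List ℕ) : ℕ :=
  ((u.sublists.filter (fun v => v.head? ≠ some 0)).dedup).length

/-- `S_b(n)`: number of distinct words of `L_b` occurring as scattered subwords of
the base-`b` expansion of `n` (most significant digit first, `rep_b(0) = ε`). -/
def Sb (b n : ℕ) : ℕ := lbCount ((Nat.digits b n).reverse)

/-- Summatory function `A_b(n) = ∑_{j<n} S_b(j)`. -/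
def Asum (b n : ℕ) : ℕ := ∑ j ∈ Finset.range n, Sb b j

/-!
Write `T w` for the set of words of `L_b` that are scattered subwords of `w`. A word of
`T (w ++ [a])` either lies in `T w` or is `v ++ [a]` with `v ∈ T w`; the only such `v ++ [a]`
outside `L_b` is `[0]`, and the words counted twice are those of `T w` ending in `a`. Summing
over the `b` letters `a`, every nonempty word of `T w` ends in exactly one of them, so
`∑ₐ #T (w ++ [a]) = 2b · #T w - 1 - (#T w - 1) = (2b - 1) · #T w`. The expansions of
`b q, …, b q + b - 1` are that of `q` followed by one digit, so each block of `b` consecutive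
terms of `A_b(b n)` sums to `(2b - 1) · S_b(q)`.
-/

open Finset

def lSubwords (w : List ℕ) : Finset (List ℕ) :=
  (w.sublists.filter (fun v => v.head? ≠ some 0)).toFinset

theorem mem_lSubwords {w v : List ℕ} :
    v ∈ lSubwords w ↔ v.Sublist w ∧ v.head? ≠ some 0 := by
  simp [lSubwords]

theorem lbCount_eq_card_lSubwords (w : List ℕ) : lbCount w = #(lSubwords w) :=
  (List.card_toFinset _).symm

theorem nil_mem_lSubwords (w : List ℕ) : [] ∈ lSubwords w := by
  simp [mem_lSubwords]

theorem zero_singleton_notMem_lSubwords (w : List ℕ) : [0] ∉ lSubwords w := by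
  simp [mem_lSubwords]

theorem head?_append_singleton_ne_zero {v : List ℕ} {a : ℕ} :
    (v ++ [a]).head? ≠ some 0 ↔ v.head? ≠ some 0 ∧ v ++ [a] ≠ [0] := by
  cases v <;> simp

theorem mem_lSubwords_of_append_singleton {w v : List ℕ} {a : ℕ}
    (h : v ++ [a] ∈ lSubwords w) : v ∈ lSubwords w := by
  rw [mem_lSubwords, head?_append_singleton_ne_zero] at h
  exact mem_lSubwords.2 ⟨(List.sublist_append_left v [a]).trans h.1, h.2.1⟩

theorem lSubwords_append_singleton (w : List ℕ) (a : ℕ) :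
    lSubwords (w ++ [a]) =
      (lSubwords w ∪ (lSubwords w).image (· ++ [a])).erase [0] := by
  ext u
  simp only [mem_erase, mem_union, mem_image]
  constructor
  · intro hu
    obtain ⟨hsub, hhead⟩ := mem_lSubwords.1 hu
    refine ⟨by rintro rfl; simp at hhead, ?_⟩
    obtain ⟨v, l, rfl, hv, hl⟩ := List.sublist_append_iff.1 hsub
    rcases List.sublist_singleton.1 hl with rfl | rfl
    · exact Or.inl (by simpa using mem_lSubwords.2 ⟨hv, by simpa using hhead⟩)
    · exact Or.inr
        ⟨v, mem_lSubwords.2 ⟨hv, (head?_append_singleton_ne_zero.1 hhead).1⟩, rfl⟩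
  · rintro ⟨hne, hu | ⟨v, hv, rfl⟩⟩
    · obtain ⟨hsub, hhead⟩ := mem_lSubwords.1 hu
      exact mem_lSubwords.2 ⟨hsub.trans (List.sublist_append_left w [a]), hhead⟩
    · obtain ⟨hsub, hhead⟩ := mem_lSubwords.1 hv
      exact mem_lSubwords.2
        ⟨hsub.append_right [a], head?_append_singleton_ne_zero.2 ⟨hhead, hne⟩⟩

theorem lSubwords_inter_image_append_singleton (w : List ℕ) (a : ℕ) :
    lSubwords w ∩ (lSubwords w).image (· ++ [a]) =
      (lSubwords w).filter (·.getLast? = some a) := by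
  ext u
  simp only [mem_inter, mem_image, mem_filter, List.getLast?_eq_some_iff]
  constructor
  · rintro ⟨hu, v, -, rfl⟩
    exact ⟨hu, v, rfl⟩
  · rintro ⟨hu, v, rfl⟩
    exact ⟨hu, v, mem_lSubwords_of_append_singleton hu, rfl⟩

theorem card_lSubwords_append_singleton (w : List ℕ) (a : ℕ) :
    #(lSubwords (w ++ [a])) + (if a = 0 then 1 else 0)
      + #((lSubwords w).filter (·.getLast? = some a)) = 2 * #(lSubwords w) := by
  have himage : #((lSubwords w).image (· ++ [a])) = #(lSubwords w) :=
    card_image_of_injective _ (List.append_left_injective [a])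
  have hzero : [0] ∈ lSubwords w ∪ (lSubwords w).image (· ++ [a]) ↔ a = 0 := by
    simp only [mem_union, zero_singleton_notMem_lSubwords, false_or, mem_image]
    exact ⟨fun ⟨v, _, h⟩ => by simpa using congrArg List.getLast? h,
      fun ha => ⟨[], nil_mem_lSubwords w, by rw [ha]; rfl⟩⟩
  have hunion := card_union_add_card_inter (lSubwords w) ((lSubwords w).image (· ++ [a]))
  rw [lSubwords_append_singleton, ← lSubwords_inter_image_append_singleton]
  split_ifs with ha
  · rw [card_erase_add_one (hzero.2 ha)]
    omega
  · rw [erase_eq_of_notMem (mt hzero.1 ha)]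
    omega

theorem sum_card_filter_getLast?_eq {w : List ℕ} {s : Finset ℕ} (hw : ∀ d ∈ w, d ∈ s) :
    ∑ a ∈ s, #((lSubwords w).filter (·.getLast? = some a)) = #(lSubwords w) - 1 := by
  have hmaps : Set.MapsTo List.getLast? (lSubwords w : Set (List ℕ))
      ((insert none (s.image some) : Finset (Option ℕ)) : Set (Option ℕ)) := by
    intro u hu
    obtain ⟨hsub, -⟩ := mem_lSubwords.1 hu
    cases hlast : u.getLast? with
    | none => exact mem_insert_self _ _
    | some d =>
      exact mem_insert_of_mem
        (mem_image_of_mem some (hw d (hsub.subset (List.mem_of_getLast? hlast))))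
  have hnil : (lSubwords w).filter (·.getLast? = none) = {[]} := by
    ext u
    simp only [mem_filter, mem_singleton, List.getLast?_eq_none_iff]
    exact ⟨And.right, fun h => ⟨h ▸ nil_mem_lSubwords w, h⟩⟩
  rw [card_eq_sum_card_fiberwise hmaps, sum_insert (by simp), hnil, card_singleton,
    sum_image (Option.some_injective _).injOn]
  omega

theorem sum_card_lSubwords_append_singleton {w : List ℕ} {s : Finset ℕ} (hs : 0 ∈ s)
    (hw : ∀ d ∈ w, d ∈ s) :
    ∑ a ∈ s, #(lSubwords (w ++ [a])) = (2 * #s - 1) * #(lSubwords w) := by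
  have hsum := sum_congr rfl fun a (_ : a ∈ s) => card_lSubwords_append_singleton w a
  rw [sum_add_distrib, sum_add_distrib, sum_ite_eq' s 0, if_pos hs,
    sum_card_filter_getLast?_eq hw, sum_const, smul_eq_mul] at hsum
  have hpos : 0 < #(lSubwords w) := card_pos.2 ⟨[], nil_mem_lSubwords w⟩
  rw [mul_left_comm] at hsum
  rw [Nat.sub_mul, one_mul, mul_assoc]
  omega

theorem Sb_mul_add {b : ℕ} (hb : 1 < b) (q : ℕ) {r : ℕ} (hr : r < b) :
    Sb b (b * q + r) = #(lSubwords ((Nat.digits b q).reverse ++ [r])) := by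
  rw [Sb, lbCount_eq_card_lSubwords]
  by_cases hqr : q = 0 ∧ r = 0
  · -- `0` has the empty expansion, and `[0]` has the same `L_b`-subwords as `[]`.
    obtain ⟨rfl, rfl⟩ := hqr
    simp only [mul_zero, add_zero, Nat.digits_zero, List.reverse_nil, List.nil_append]
    decide
  · rw [add_comm, Nat.digits_add b hb r q hr (or_comm.1 (not_and_or.1 hqr)),
      List.reverse_cons]

theorem sum_Sb_mul_add {b : ℕ} (hb : 2 ≤ b) (q : ℕ) :
    ∑ r ∈ range b, Sb b (b * q + r) = (2 * b - 1) * Sb b q := by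
  have hdigits : ∀ d ∈ (Nat.digits b q).reverse, d ∈ range b := fun d hd =>
    mem_range.2 (Nat.digits_lt_base hb (List.mem_reverse.1 hd))
  rw [sum_congr rfl fun r hr => Sb_mul_add hb q (mem_range.1 hr),
    sum_card_lSubwords_append_singleton (mem_range.2 (by omega)) hdigits, card_range,
    Sb, lbCount_eq_card_lSubwords]

theorem stmt18 (b n : ℕ) (hb : 2 ≤ b) :
    Asum b (b * n) = (2 * b - 1) * Asum b n := by
  induction n with
  | zero => simp [Asum]
  | succ n ih =>
    simp only [Asum] at ih ⊢
    rw [mul_add_one, sum_range_add, ih, sum_Sb_mul_add hb, sum_range_succ, mul_add]
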